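/- arXiv:2604.02395 — 3 statements merged into one kernel-verified Lean document; each statement's English description precedes it below -/
import Mathlib

section
/- Let (U, 𝒜, k) be a hitting set instance. Construct the bipartite directed graph G with a red vertex r_u for each u ∈ U, a blue vertex v_A for each A ∈ 𝒜 with edges (v_A, r_u) for every u ∈ A, plus blue dummy out-neighbors so that each v_A has p-deficiency exactly 1. Then there is a hitting set of size at most k if and only if there is a set S of at most k red vertices whose recoloring to blue makes every vertex of G p-illusion-free. -/
open Finset

/-- Vertices of the hitting-set reduction graph: element vertices (red), set vertices
(blue), and dummy blue vertices indexed by a set together with a counter. -/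
abbrev HSVtx (U : Type*) := U ⊕ (Finset U ⊕ Finset U × ℕ)

/-- Out-neighborhoods in the reduction graph: the set vertex of `A ∈ 𝒜` points to the red
element vertices of `A` and to `x A` dummy blue vertices; all other vertices are sinks. -/
def hsNbr {U : Type*} [DecidableEq U] (𝒜 : Finset (Finset U)) (x : Finset U → ℕ) :
    HSVtx U → Finset (HSVtx U)
  | Sum.inl _ => ∅
  | Sum.inr (Sum.inl A) =>
      if A ∈ 𝒜 then
        A.image Sum.inl ∪ (Finset.range (x A)).image (fun i => Sum.inr (Sum.inr (A, i)))
      else ∅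
  | Sum.inr (Sum.inr _) => ∅

lemma hs_card {U : Type*} [DecidableEq U] (𝒜 : Finset (Finset U)) (x : Finset U → ℕ)
    {A : Finset U} (hA : A ∈ 𝒜) :
    (hsNbr 𝒜 x (Sum.inr (Sum.inl A))).card = A.card + x A := by
  simp only [hsNbr, if_pos hA]
  rw [Finset.card_union_of_disjoint]
  · rw [Finset.card_image_of_injective _ Sum.inl_injective,
      Finset.card_image_of_injective _ (by intro a b h; simpa using h), Finset.card_range]
  · simp [Finset.disjoint_left]

lemma hs_filter_card {U : Type*} [DecidableEq U] (𝒜 : Finset (Finset U)) (x : Finset U → ℕ)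
    {A : Finset U} (hA : A ∈ 𝒜) (S : Finset U) :
    ((hsNbr 𝒜 x (Sum.inr (Sum.inl A))).filter
      (fun w => (Sum.elim (fun u => decide (u ∈ S)) (fun _ => true) w) = true)).card
      = (A ∩ S).card + x A := by
  simp only [hsNbr, if_pos hA, Finset.filter_union]
  rw [Finset.card_union_of_disjoint]
  · congr 1
    · rw [Finset.filter_image]
      rw [Finset.card_image_of_injective _ Sum.inl_injective]
      congr 1
      ext u
      simp [Finset.mem_inter]
    · rw [Finset.filter_image]
      rw [Finset.card_image_of_injective _ (by intro a b h; simpa using h)]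
      simp
  · exact Finset.disjoint_filter_filter (by simp [Finset.disjoint_left])

/-- Hitting-set reduction. With the blue dummies chosen so that each set
vertex `v_A` has `p`-deficiency exactly 1 (`⌈p·(|A| + x A)⌉ = x A + 1`), there is a
hitting set of size at most `k` iff there is a set `S` of at most `k` element (red)
vertices whose recoloring to blue makes every vertex of the graph `p`-illusion-free. -/
theorem stmt10 {U : Type*} [DecidableEq U] (𝒜 : Finset (Finset U)) (p : ℚ)
    (hp0 : 0 < p) (hp1 : p < 1) (x : Finset U → ℕ)
    (hbig : ∀ A ∈ 𝒜, (⌈1/p⌉₊ : ℕ) < A.card)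
    (hdef : ∀ A ∈ 𝒜, ⌈p * ((A.card + x A : ℕ) : ℚ)⌉₊ = x A + 1)
    (k : ℕ) :
    (∃ H : Finset U, H.card ≤ k ∧ ∀ A ∈ 𝒜, (H ∩ A).Nonempty) ↔
    (∃ S : Finset U, S.card ≤ k ∧ ∀ v : HSVtx U,
      ⌈p * (((hsNbr 𝒜 x v).card : ℕ) : ℚ)⌉₊ ≤
        ((hsNbr 𝒜 x v).filter
          (fun w => (Sum.elim (fun u => decide (u ∈ S)) (fun _ => true) w) = true)).card) := by
  constructor
  · rintro ⟨H, hHk, hH⟩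
    refine ⟨H, hHk, ?_⟩
    intro v
    match v with
    | Sum.inl u => simp [hsNbr]
    | Sum.inr (Sum.inr w) => simp [hsNbr]
    | Sum.inr (Sum.inl A) =>
      by_cases hA : A ∈ 𝒜
      · rw [hs_card 𝒜 x hA, hs_filter_card 𝒜 x hA, hdef A hA]
        have : (A ∩ H).Nonempty := by rw [Finset.inter_comm]; exact hH A hA
        have := Finset.card_pos.mpr this
        omega
      · simp [hsNbr, hA]
  · rintro ⟨S, hSk, hS⟩
    refine ⟨S, hSk, ?_⟩
    intro A hA
    have := hS (Sum.inr (Sum.inl A))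
    rw [hs_card 𝒜 x hA, hs_filter_card 𝒜 x hA, hdef A hA] at this
    rw [Finset.inter_comm]
    rw [← Finset.card_pos]
    omega
end

section
/- Let G be an m×n outward grid with coloring f, let X be the set of vertices with exactly two out-neighbors both of which are red, and let H be the undirected graph on red vertices where the two red out-neighbors of each x ∈ X are joined by an edge. Then H is acyclic (a forest); in particular H is bipartite. -/
open Finset

def gridN (m n : ℕ) (v : ℕ × ℕ) : Finset (ℕ × ℕ) :=
  ({(v.1, v.2 + 1), (v.1 + 1, v.2)} : Finset (ℕ × ℕ)).filter (fun w => w.1 < m ∧ w.2 < n)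

def auxH (m n : ℕ) (f : ℕ × ℕ → Bool) : SimpleGraph (ℕ × ℕ) :=
  SimpleGraph.fromRel (fun a b => ∃ x : ℕ × ℕ, x.1 < m ∧ x.2 < n ∧
    f a = false ∧ f b = false ∧ gridN m n x = {a, b})

lemma adj_struct {m n : ℕ} {f : ℕ × ℕ → Bool} {a b : ℕ × ℕ}
    (h : (auxH m n f).Adj a b) :
    a.1 + a.2 = b.1 + b.2 ∧ (a.1 = b.1 + 1 ∨ b.1 = a.1 + 1) := by
  obtain ⟨hne, h⟩ := h
  have key : ∀ x : ℕ × ℕ, gridN m n x = {a, b} →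
      a.1 + a.2 = b.1 + b.2 ∧ (a.1 = b.1 + 1 ∨ b.1 = a.1 + 1) := by
    intro x hx
    have ha : a ∈ gridN m n x := by rw [hx]; simp
    have hb : b ∈ gridN m n x := by rw [hx]; simp
    simp only [gridN, mem_filter, mem_insert, mem_singleton] at ha hb
    obtain ⟨ha, -⟩ := ha
    obtain ⟨hb, -⟩ := hb
    rcases ha with ha | ha <;> rcases hb with hb | hb <;>
      first
      | (exfalso; exact hne (ha.trans hb.symm))
      | (subst ha; subst hb; simp; omega)
  rcases h with ⟨x, _, _, _, _, hx⟩ | ⟨x, _, _, _, _, hx⟩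
  · exact key x hx
  · rw [Finset.pair_comm] at hx
    exact key x hx

lemma walk_sum {m n : ℕ} {f : ℕ × ℕ → Bool} {a b : ℕ × ℕ}
    (p : (auxH m n f).Walk a b) :
    ∀ u ∈ p.support, u.1 + u.2 = a.1 + a.2 := by
  induction p with
  | nil => intro u hu; simp at hu; subst hu; rfl
  | cons h p ih =>
    intro u hu
    rw [SimpleGraph.Walk.support_cons, List.mem_cons] at hu
    rcases hu with rfl | hu
    · rfl
    · rw [ih u hu]
      exact ((adj_struct h).1).symm

/-- The auxiliary graph `H` of an outward grid is acyclic (a forest);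
in particular it is bipartite (2-colorable). -/
theorem stmt13 (m n : ℕ) (f : ℕ × ℕ → Bool) :
    (auxH m n f).IsAcyclic ∧ (auxH m n f).Colorable 2 := by
  constructor
  · intro v c hc
    -- pick a vertex of maximal first coordinate on the cycle
    have hne : c.support.toFinset.Nonempty := by
      simp [List.toFinset_nonempty_iff]
    obtain ⟨u, hu, hmax⟩ := Finset.exists_max_image c.support.toFinset Prod.fst hne
    rw [List.mem_toFinset] at hu
    have hmax' : ∀ w ∈ c.support, w.1 ≤ u.1 := fun w hw =>
      hmax w (List.mem_toFinset.mpr hw)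
    -- rotate the cycle to start at u
    set c' := c.rotate u hu with hc'def
    have hc' : c'.IsCycle := hc.rotate hu
    have hsub : ∀ w ∈ c'.support, w ∈ c.support := by
      intro w hw
      rw [c'.support_eq_cons, List.mem_cons] at hw
      rcases hw with rfl | hw
      · exact hu
      · rw [(SimpleGraph.Walk.support_rotate c u hu).mem_iff] at hw
        exact List.mem_of_mem_tail hw
    have hsum : ∀ w ∈ c'.support, w.1 + w.2 = u.1 + u.2 := walk_sum c'
    cases hcc : c' with
    | nil => exact hc'.not_nil (by rw [hcc]; simp)
    | cons h p =>
      rw [hcc] at hc'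
      rw [SimpleGraph.Walk.cons_isCycle_iff] at hc'
      obtain ⟨hp, hedge⟩ := hc'
      -- p : Walk w u, h : Adj u w
      rename_i w
      -- p is nonempty since w ≠ u
      have hwu : w ≠ u := h.ne'
      cases hpr : p.reverse with
      | nil => exact hwu (by have := congrArg SimpleGraph.Walk.reverse hpr; simpa using this ▸ rfl)
      | cons h2 q =>
        rename_i z
        -- h2 : Adj u z
        have hz_mem : z ∈ p.support := by
          have : z ∈ p.reverse.support := by rw [hpr]; simp
          rwa [SimpleGraph.Walk.support_reverse, List.mem_reverse] at this
        have hw_mem : w ∈ p.support := p.start_mem_support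
        have hmemc' : ∀ x ∈ p.support, x ∈ c'.support := by
          intro x hx; rw [hcc, SimpleGraph.Walk.support_cons]; exact List.mem_cons_of_mem _ hx
        -- first coordinates
        have hw1 : u.1 = w.1 + 1 := by
          rcases (adj_struct h).2 with h1 | h1
          · exact h1
          · exact absurd (h1 ▸ hmax' w (hsub w (hmemc' w hw_mem))) (by omega)
        have hz1 : u.1 = z.1 + 1 := by
          rcases (adj_struct h2).2 with h1 | h1
          · exact h1
          · exact absurd (h1 ▸ hmax' z (hsub z (hmemc' z hz_mem))) (by omega)
        -- sums
        have hwsum : w.1 + w.2 = u.1 + u.2 := hsum w (hmemc' w hw_mem)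
        have hzsum : z.1 + z.2 = u.1 + u.2 := hsum z (hmemc' z hz_mem)
        have hwz : w = z := by
          have : w.1 = z.1 := by omega
          have : w.2 = z.2 := by omega
          exact Prod.ext ‹w.1 = z.1› this
        -- but then the edge s(u,w) appears in p.edges
        subst hwz
        apply hedge
        have : s(u, w) ∈ p.reverse.edges := by rw [hpr]; simp
        rwa [SimpleGraph.Walk.edges_reverse, List.mem_reverse] at this
  · refine ⟨⟨fun v => (v.1 : ZMod 2), ?_⟩⟩
    intro a b hab hEq
    have h2 := (adj_struct hab).2
    have hEq' : (a.1 : ZMod 2) = (b.1 : ZMod 2) := hEq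
    rcases h2 with h1 | h1 <;> rw [h1] at hEq' <;> push_cast at hEq' <;>
      simp at hEq'
end

section
/- Consider the variable cycle gadget: a cycle alternating between 2ℓ red variable vertices and 2ℓ blue controller vertices, where each controller vertex has exactly its two adjacent variable vertices as out-neighbors (and variable vertices have no out-neighbors in the gadget). Any recoloring making all controller vertices illusion-free must recolor at least ℓ of the red variable vertices, and recoloring all ℓ positive variable vertices (every other red vertex) achieves this bound. -/
open Finset

/-- Variable vertices of the cycle gadget: `Sum.inl i` is the positive variable vertex
`vⁱ_x`, `Sum.inr i` is the negative variable vertex `vⁱ_x̄`; all are red. -/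
abbrev GVar (ℓ : ℕ) := Fin ℓ ⊕ Fin ℓ

/-- Out-neighborhoods of the `2ℓ` blue controller vertices of the cycle gadget:
controller `(i, false)` (= `v^{x(2i+1)}`) points to `vⁱ_x` and `vⁱ_x̄`;
controller `(i, true)` (= `v^{x(2i+2)}`) points to `vⁱ_x̄` and `v^{i+1}_x` (index mod ℓ). -/
def gadN (ℓ : ℕ) [NeZero ℓ] : Fin ℓ × Bool → Finset (GVar ℓ)
  | (i, false) => {Sum.inl i, Sum.inr i}
  | (i, true) => {Sum.inr i, Sum.inl (i + 1)}

lemma pair_mem {α : Type*} [DecidableEq α] {a b : α} (hab : a ≠ b) {S : Finset α}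
    (h : (({a, b} : Finset α).filter (fun w => ¬ w ∈ S)).card ≤
      (({a, b} : Finset α).filter (fun w => w ∈ S)).card) : a ∈ S ∨ b ∈ S := by
  by_contra hc
  push_neg at hc
  simp [Finset.filter_insert, Finset.filter_singleton, hc.1, hc.2, hab] at h

/-- In the variable cycle gadget, any recoloring (a set `S` of variable
vertices turned blue) making all `2ℓ` controller vertices illusion-free must recolor at
least `ℓ` variable vertices; and recoloring exactly the `ℓ` positive variable vertices
achieves this bound. -/
theorem stmt19 (ℓ : ℕ) [NeZero ℓ] :
    (∀ S : Finset (GVar ℓ),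
      (∀ c : Fin ℓ × Bool,
        ((gadN ℓ c).filter (fun w => ¬ w ∈ S)).card ≤
          ((gadN ℓ c).filter (fun w => w ∈ S)).card) →
      ℓ ≤ S.card) ∧
    (∀ c : Fin ℓ × Bool,
      ((gadN ℓ c).filter
          (fun w => ¬ w ∈ (univ : Finset (Fin ℓ)).image Sum.inl)).card ≤
        ((gadN ℓ c).filter
          (fun w => w ∈ (univ : Finset (Fin ℓ)).image (Sum.inl : Fin ℓ → GVar ℓ))).card) ∧
    ((univ : Finset (Fin ℓ)).image (Sum.inl : Fin ℓ → GVar ℓ)).card = ℓ := by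
  refine ⟨?_, ?_, ?_⟩
  · intro S hS
    have key : ∀ i : Fin ℓ, (if Sum.inr i ∈ S then (Sum.inr i : GVar ℓ) else Sum.inl (i+1)) ∈ S := by
      intro i
      by_cases h : Sum.inr i ∈ S
      · simp [h]
      · have := pair_mem (by simp) (hS (i, true))
        simpa [h] using this
    have hinj : Set.InjOn (fun i : Fin ℓ => if Sum.inr i ∈ S then (Sum.inr i : GVar ℓ) else Sum.inl (i+1)) ↑(univ : Finset (Fin ℓ)) := by
      intro a _ b _ hab
      by_cases ha : Sum.inr a ∈ S <;> by_cases hb : Sum.inr b ∈ S <;>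
        simp [ha, hb] at hab
      · exact hab
      · exact hab
    calc ℓ = (univ : Finset (Fin ℓ)).card := by simp
      _ ≤ S.card := Finset.card_le_card_of_injOn _ (fun i _ => key i) hinj
  · intro c
    obtain ⟨i, b⟩ := c
    cases b <;>
      simp [gadN, Finset.filter_insert, Finset.filter_singleton]
  · rw [Finset.card_image_of_injective _ Sum.inl_injective, Finset.card_univ, Fintype.card_fin]
end
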